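/- arXiv:1911.10955 — 3 statements merged into one kernel-verified Lean document; each statement's English description precedes it below -/
import Mathlib

section
/- For every c ∈ ℝ^d and a > 0, the integral over ℝ^d of (‖t‖² − d)² · cos(tᵀc) · exp(−a‖t‖²) dt equals (π/a)^(d/2) · [16d²a³(a−1) + 4d(d+2)a² + (8da² − 4(d+2)a)‖c‖² + ‖c‖⁴] / (16a⁴) · exp(−‖c‖²/(4a)). -/
open MeasureTheory Real Metric

variable {d : ℕ}

local notation "E" d => EuclideanSpace ℝ (Fin d)

-- pointwise bound
lemma aux_pow_exp_le (k : ℕ) {b x : ℝ} (hb : 0 < b) (hx : 0 ≤ x) :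
    x ^ (2 * k) * Real.exp (-b * x ^ 2) ≤
      (k.factorial * (2 / b) ^ k) * Real.exp (-(b / 2) * x ^ 2) := by
  have h1 : ((b / 2) * x ^ 2) ^ k / k.factorial ≤ Real.exp ((b / 2) * x ^ 2) :=
    Real.pow_div_factorial_le_exp (x := (b / 2) * x ^ 2) (by positivity) k
  have h2 : x ^ (2 * k) ≤ (k.factorial * (2 / b) ^ k) * Real.exp ((b / 2) * x ^ 2) := by
    have hk : (0:ℝ) < k.factorial := by positivity
    rw [div_le_iff₀ hk] at h1
    have : ((b / 2) * x ^ 2) ^ k = (b / 2) ^ k * x ^ (2 * k) := by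
      rw [mul_pow, ← pow_mul]
      
    rw [this] at h1
    calc x ^ (2 * k) = ((2 / b) ^ k * (b / 2) ^ k) * x ^ (2 * k) := by
          rw [← mul_pow]
          field_simp
          simp
      _ = (2 / b) ^ k * ((b / 2) ^ k * x ^ (2 * k)) := by ring
      _ ≤ (2 / b) ^ k * (Real.exp ((b / 2) * x ^ 2) * k.factorial) := by
          apply mul_le_mul_of_nonneg_left h1 (by positivity)
      _ = (k.factorial * (2 / b) ^ k) * Real.exp ((b / 2) * x ^ 2) := by ring
  calc x ^ (2 * k) * Real.exp (-b * x ^ 2)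
      ≤ ((k.factorial * (2 / b) ^ k) * Real.exp ((b / 2) * x ^ 2)) * Real.exp (-b * x ^ 2) := by
        apply mul_le_mul_of_nonneg_right h2 (Real.exp_nonneg _)
    _ = (k.factorial * (2 / b) ^ k) * Real.exp (-(b / 2) * x ^ 2) := by
        rw [mul_assoc, ← Real.exp_add]; ring_nf

lemma integrable_exp_sq (d : ℕ) {b : ℝ} (hb : 0 < b) :
    Integrable (fun v : E d => Real.exp (-b * ‖v‖ ^ 2)) := by
  have hb' : 0 < ((b : ℂ)).re := by simpa using hb
  have h := (GaussianFourier.integrable_cexp_neg_mul_sq_norm_add (V := E d) hb' 0 (0 : E d)).norm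
  refine h.congr (Filter.Eventually.of_forall fun v => ?_)
  simp [Complex.norm_exp, ← Complex.ofReal_pow]

lemma integrable_pow_exp_sq (d k : ℕ) {b : ℝ} (hb : 0 < b) :
    Integrable (fun v : E d => ‖v‖ ^ (2 * k) * Real.exp (-b * ‖v‖ ^ 2)) := by
  have hcont : Continuous (fun v : E d => ‖v‖ ^ (2 * k) * Real.exp (-b * ‖v‖ ^ 2)) := by
    fun_prop
  refine ((integrable_exp_sq d (half_pos hb)).const_mul
      (k.factorial * (2 / b) ^ k)).mono' hcont.aestronglyMeasurable ?_
  refine Filter.Eventually.of_forall fun v => ?_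
  rw [Real.norm_eq_abs, abs_of_nonneg (by positivity)]
  exact aux_pow_exp_le k hb (norm_nonneg v)

lemma integrable_pow_cos_exp_sq (d k : ℕ) (c : E d) {b : ℝ} (hb : 0 < b) :
    Integrable (fun v : E d =>
      ‖v‖ ^ (2 * k) * Real.cos (inner ℝ v c) * Real.exp (-b * ‖v‖ ^ 2)) := by
  have hcont : Continuous (fun v : E d =>
      ‖v‖ ^ (2 * k) * Real.cos (inner ℝ v c) * Real.exp (-b * ‖v‖ ^ 2)) := by
    have h1 : Continuous fun v : E d => (inner ℝ v c : ℝ) :=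
      continuous_id.inner continuous_const
    exact ((continuous_norm.pow _).mul (Real.continuous_cos.comp h1)).mul
      (Real.continuous_exp.comp (continuous_const.mul (continuous_norm.pow 2)))
  refine (integrable_pow_exp_sq d k hb).mono' hcont.aestronglyMeasurable ?_
  refine Filter.Eventually.of_forall fun v => ?_
  rw [Real.norm_eq_abs, abs_mul, abs_mul]
  calc |‖v‖ ^ (2 * k)| * |Real.cos (inner ℝ v c)| * |Real.exp (-b * ‖v‖ ^ 2)|
      ≤ |‖v‖ ^ (2 * k)| * 1 * |Real.exp (-b * ‖v‖ ^ 2)| := by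
        gcongr; exact Real.abs_cos_le_one _
    _ = ‖v‖ ^ (2 * k) * Real.exp (-b * ‖v‖ ^ 2) := by
        rw [mul_one, abs_of_nonneg (by positivity), abs_of_nonneg (Real.exp_nonneg _)]

lemma base_integral (d : ℕ) (c : E d) {b : ℝ} (hb : 0 < b) :
    ∫ v : E d, Real.cos (inner ℝ v c) * Real.exp (-b * ‖v‖ ^ 2)
      = (π / b) ^ ((d : ℝ) / 2) * Real.exp (-‖c‖ ^ 2 / (4 * b)) := by
  have hb' : 0 < ((b : ℂ)).re := by simpa using hb
  have h := GaussianFourier.integral_cexp_neg_mul_sq_norm_add (V := E d) hb' Complex.I c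
  rw [finrank_euclideanSpace_fin] at h
  have hre : (∫ v : E d, Complex.exp (-(b : ℂ) * ‖v‖ ^ 2 + Complex.I * (inner ℝ c v : ℝ))).re
      = ∫ v : E d, Real.cos (inner ℝ v c) * Real.exp (-b * ‖v‖ ^ 2) := by
    have hint := integral_re
      (GaussianFourier.integrable_cexp_neg_mul_sq_norm_add (V := E d) hb' Complex.I c)
    simp only [RCLike.re_to_complex] at hint
    rw [← hint]
    congr 1
    funext v
    rw [Complex.exp_re]
    norm_num [← Complex.ofReal_pow, real_inner_comm v c]
    ring
  rw [h] at hre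
  rw [← hre]
  have h1 : ((π : ℂ) / b) ^ ((d : ℂ) / 2) = ((π / b) ^ ((d : ℝ) / 2) : ℝ) := by
    rw [show ((d : ℂ) / 2) = (((d : ℝ) / 2 : ℝ) : ℂ) by push_cast; ring,
      ← Complex.ofReal_div, ← Complex.ofReal_cpow (by positivity)]
  have h2 : Complex.exp (Complex.I ^ 2 * (‖c‖ : ℂ) ^ 2 / (4 * b))
      = (Real.exp (-‖c‖ ^ 2 / (4 * b)) : ℝ) := by
    rw [Complex.I_sq, Complex.ofReal_exp]
    norm_num [← Complex.ofReal_pow]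
  rw [h1, h2, ← Complex.ofReal_mul, Complex.ofReal_re]

lemma hasDerivAt_phi0 (d : ℕ) (K : ℝ) {a : ℝ} (ha : 0 < a) :
    HasDerivAt (fun a : ℝ => (π / a) ^ ((d : ℝ) / 2) * Real.exp (-K / (4 * a)))
      ((π / a) ^ ((d : ℝ) / 2) * Real.exp (-K / (4 * a)) *
        (-(d : ℝ) / (2 * a) + K / (4 * a ^ 2))) a := by
  have hπa : (0 : ℝ) < π / a := div_pos pi_pos ha
  have hπ : HasDerivAt (fun a : ℝ => π / a) ((0 * a - π * 1) / a ^ 2) a :=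
    (hasDerivAt_const a π).div (hasDerivAt_id a) ha.ne'
  have h2 := hπ.rpow_const (p := (d : ℝ) / 2) (Or.inl hπa.ne')
  have h4a : HasDerivAt (fun y : ℝ => 4 * y) 4 a := by
    simpa using (hasDerivAt_id a).const_mul (4 : ℝ)
  have h3 : HasDerivAt (fun a : ℝ => -K / (4 * a))
      ((0 * (4 * a) - -K * 4) / (4 * a) ^ 2) a :=
    (hasDerivAt_const a (-K)).div h4a (by positivity)
  have h5 := h2.mul h3.exp
  refine h5.congr_deriv ?_
  rw [Real.rpow_sub hπa, Real.rpow_one]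
  field_simp
  ring

lemma hasDerivAt_phi1 (d : ℕ) (K : ℝ) {a : ℝ} (ha : 0 < a) :
    HasDerivAt (fun a : ℝ => -((π / a) ^ ((d : ℝ) / 2) * Real.exp (-K / (4 * a)) *
        (-(d : ℝ) / (2 * a) + K / (4 * a ^ 2))))
      (-((π / a) ^ ((d : ℝ) / 2) * Real.exp (-K / (4 * a)) *
        ((-(d : ℝ) / (2 * a) + K / (4 * a ^ 2)) ^ 2 +
          ((d : ℝ) / (2 * a ^ 2) - K / (2 * a ^ 3))))) a := by
  have h2a : HasDerivAt (fun y : ℝ => 2 * y) 2 a := by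
    simpa using (hasDerivAt_id a).const_mul (2 : ℝ)
  have t1 : HasDerivAt (fun a : ℝ => -(d : ℝ) / (2 * a))
      ((0 * (2 * a) - -(d : ℝ) * 2) / (2 * a) ^ 2) a :=
    (hasDerivAt_const a (-(d : ℝ))).div h2a (by positivity)
  have t2 := (hasDerivAt_const a K).div ((hasDerivAt_pow 2 a).const_mul 4)
    (by positivity : (4 : ℝ) * a ^ 2 ≠ 0)
  have hu := t1.add t2
  have h := ((hasDerivAt_phi0 d K ha).mul hu).neg
  refine h.congr_deriv ?_
  simp only [Pi.add_apply, Pi.div_apply]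
  have h1 : ((π / a) ^ ((d : ℝ) / 2)) ≠ 0 := by positivity
  field_simp
  ring

lemma cont_aux (d k : ℕ) (c : E d) (b : ℝ) :
    Continuous (fun v : E d =>
      (‖v‖ ^ k * Real.cos (inner ℝ v c)) * (Real.exp (-b * ‖v‖ ^ 2) * -‖v‖ ^ 2)) := by
  have h1 : Continuous fun v : E d => (inner ℝ v c : ℝ) :=
    continuous_id.inner continuous_const
  exact ((continuous_norm.pow _).mul (Real.continuous_cos.comp h1)).mul
    ((Real.continuous_exp.comp (continuous_const.mul (continuous_norm.pow 2))).mul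
      (continuous_norm.pow 2).neg)

lemma L1_eq (d : ℕ) (c : E d) {a : ℝ} (ha : 0 < a) :
    ∫ v : E d, ‖v‖ ^ 2 * Real.cos (inner ℝ v c) * Real.exp (-a * ‖v‖ ^ 2)
      = -((π / a) ^ ((d : ℝ) / 2) * Real.exp (-‖c‖ ^ 2 / (4 * a)) *
          (-(d : ℝ) / (2 * a) + ‖c‖ ^ 2 / (4 * a ^ 2))) := by
  set F : ℝ → (E d) → ℝ := fun b v => Real.cos (inner ℝ v c) * Real.exp (-b * ‖v‖ ^ 2) with hF
  set F' : ℝ → (E d) → ℝ :=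
    fun b v => Real.cos (inner ℝ v c) * (Real.exp (-b * ‖v‖ ^ 2) * -‖v‖ ^ 2) with hF'
  have hcont : ∀ b : ℝ, Continuous (F b) := by
    intro b
    have h1 : Continuous fun v : E d => (inner ℝ v c : ℝ) :=
      continuous_id.inner continuous_const
    exact (Real.continuous_cos.comp h1).mul
      (Real.continuous_exp.comp (continuous_const.mul (continuous_norm.pow 2)))
  have hcont' : Continuous (F' a) := by
    have h1 : Continuous fun v : E d => (inner ℝ v c : ℝ) :=
      continuous_id.inner continuous_const
    exact (Real.continuous_cos.comp h1).mul
      ((Real.continuous_exp.comp (continuous_const.mul (continuous_norm.pow 2))).mul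
        (continuous_norm.pow 2).neg)
  have hFint : Integrable (F a) volume := by
    simp only [hF]
    simpa using integrable_pow_cos_exp_sq d 0 c ha
  have hbt : Integrable (fun v : E d => ‖v‖ ^ 2 * Real.exp (-(a / 2) * ‖v‖ ^ 2)) volume := by
    simpa using integrable_pow_exp_sq d 1 (half_pos ha)
  have hbound : ∀ᵐ v : E d ∂volume, ∀ b ∈ Metric.ball a (a / 2),
      ‖F' b v‖ ≤ ‖v‖ ^ 2 * Real.exp (-(a / 2) * ‖v‖ ^ 2) := by
    refine Filter.Eventually.of_forall fun v => ?_
    intro b hb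
    have hab : a / 2 ≤ b := by
      rw [Metric.mem_ball, Real.dist_eq, abs_lt] at hb
      linarith
    have h1 : Real.exp (-b * ‖v‖ ^ 2) ≤ Real.exp (-(a / 2) * ‖v‖ ^ 2) := by
      apply Real.exp_le_exp.2
      nlinarith [sq_nonneg ‖v‖]
    have h2 : |Real.cos (inner ℝ v c)| ≤ 1 := Real.abs_cos_le_one _
    rw [Real.norm_eq_abs, hF']
    simp only [abs_mul, abs_neg, abs_of_nonneg (Real.exp_nonneg _),
      abs_of_nonneg (sq_nonneg ‖v‖)]
    calc |Real.cos (inner ℝ v c)| * (Real.exp (-b * ‖v‖ ^ 2) * ‖v‖ ^ 2)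
        ≤ 1 * (Real.exp (-(a / 2) * ‖v‖ ^ 2) * ‖v‖ ^ 2) := by
          apply mul_le_mul h2 _ (by positivity) zero_le_one
          exact mul_le_mul_of_nonneg_right h1 (sq_nonneg _)
      _ = ‖v‖ ^ 2 * Real.exp (-(a / 2) * ‖v‖ ^ 2) := by ring
  have hdiff : ∀ᵐ v : E d ∂volume, ∀ b ∈ Metric.ball a (a / 2),
      HasDerivAt (F · v) (F' b v) b := by
    refine Filter.Eventually.of_forall fun v => ?_
    intro b hb
    have hlin : HasDerivAt (fun b : ℝ => -b * ‖v‖ ^ 2) (-‖v‖ ^ 2) b := by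
      simpa using (hasDerivAt_id b).neg.mul_const (‖v‖ ^ 2)
    exact hlin.exp.const_mul (Real.cos (inner ℝ v c))
  have key := hasDerivAt_integral_of_dominated_loc_of_deriv_le (ball_mem_nhds a (half_pos ha))
      (Filter.Eventually.of_forall fun b => (hcont b).aestronglyMeasurable)
      hFint hcont'.aestronglyMeasurable hbound hbt hdiff
  have heq : (fun b : ℝ => (π / b) ^ ((d : ℝ) / 2) * Real.exp (-‖c‖ ^ 2 / (4 * b)))
        =ᶠ[nhds a] (fun b => ∫ v : E d, F b v) := by
      filter_upwards [Ioi_mem_nhds ha] with b hb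
      exact (base_integral d c hb).symm
  have hD : HasDerivAt (fun b : ℝ => (π / b) ^ ((d : ℝ) / 2) * Real.exp (-‖c‖ ^ 2 / (4 * b)))
        (∫ v : E d, F' a v) a := key.2.congr_of_eventuallyEq heq
  have huniq := hD.unique (hasDerivAt_phi0 d (‖c‖ ^ 2) ha)
  have hnn : ∫ v : E d, F' a v
      = -∫ v : E d, ‖v‖ ^ 2 * Real.cos (inner ℝ v c) * Real.exp (-a * ‖v‖ ^ 2) := by
    rw [← integral_neg]
    congr 1; funext v; simp only [hF']; ring
  rw [hnn] at huniq
  linarith [huniq]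

lemma L2_eq (d : ℕ) (c : E d) {a : ℝ} (ha : 0 < a) :
    ∫ v : E d, ‖v‖ ^ 4 * Real.cos (inner ℝ v c) * Real.exp (-a * ‖v‖ ^ 2)
      = (π / a) ^ ((d : ℝ) / 2) * Real.exp (-‖c‖ ^ 2 / (4 * a)) *
          ((-(d : ℝ) / (2 * a) + ‖c‖ ^ 2 / (4 * a ^ 2)) ^ 2 +
            ((d : ℝ) / (2 * a ^ 2) - ‖c‖ ^ 2 / (2 * a ^ 3))) := by
  set F : ℝ → (E d) → ℝ :=
    fun b v => ‖v‖ ^ 2 * Real.cos (inner ℝ v c) * Real.exp (-b * ‖v‖ ^ 2) with hF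
  set F' : ℝ → (E d) → ℝ :=
    fun b v => ‖v‖ ^ 2 * Real.cos (inner ℝ v c) * (Real.exp (-b * ‖v‖ ^ 2) * -‖v‖ ^ 2) with hF'
  have h1 : Continuous fun v : E d => (inner ℝ v c : ℝ) :=
    continuous_id.inner continuous_const
  have hcont : ∀ b : ℝ, Continuous (F b) := fun b =>
    (((continuous_norm.pow 2).mul (Real.continuous_cos.comp h1)).mul
      (Real.continuous_exp.comp (continuous_const.mul (continuous_norm.pow 2))))
  have hcont' : Continuous (F' a) :=
    ((continuous_norm.pow 2).mul (Real.continuous_cos.comp h1)).mul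
      ((Real.continuous_exp.comp (continuous_const.mul (continuous_norm.pow 2))).mul
        (continuous_norm.pow 2).neg)
  have hFint : Integrable (F a) volume := by
    simp only [hF]
    simpa using integrable_pow_cos_exp_sq d 1 c ha
  have hbt : Integrable (fun v : E d => ‖v‖ ^ 4 * Real.exp (-(a / 2) * ‖v‖ ^ 2)) volume := by
    simpa using integrable_pow_exp_sq d 2 (half_pos ha)
  have hbound : ∀ᵐ v : E d ∂volume, ∀ b ∈ Metric.ball a (a / 2),
      ‖F' b v‖ ≤ ‖v‖ ^ 4 * Real.exp (-(a / 2) * ‖v‖ ^ 2) := by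
    refine Filter.Eventually.of_forall fun v => ?_
    intro b hb
    have hab : a / 2 ≤ b := by
      rw [Metric.mem_ball, Real.dist_eq, abs_lt] at hb
      linarith
    have h1e : Real.exp (-b * ‖v‖ ^ 2) ≤ Real.exp (-(a / 2) * ‖v‖ ^ 2) := by
      apply Real.exp_le_exp.2
      nlinarith [sq_nonneg ‖v‖]
    have h2 : |Real.cos (inner ℝ v c)| ≤ 1 := Real.abs_cos_le_one _
    rw [Real.norm_eq_abs, hF']
    simp only [abs_mul, abs_neg, abs_of_nonneg (Real.exp_nonneg _),
      abs_of_nonneg (sq_nonneg ‖v‖), abs_of_nonneg (pow_nonneg (norm_nonneg v) 2)]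
    calc ‖v‖ ^ 2 * |Real.cos (inner ℝ v c)| * (Real.exp (-b * ‖v‖ ^ 2) * ‖v‖ ^ 2)
        ≤ ‖v‖ ^ 2 * 1 * (Real.exp (-(a / 2) * ‖v‖ ^ 2) * ‖v‖ ^ 2) := by
          apply mul_le_mul (by nlinarith [sq_nonneg ‖v‖, abs_nonneg (Real.cos (inner ℝ v c))])
            (mul_le_mul_of_nonneg_right h1e (sq_nonneg _)) (by positivity) (by positivity)
      _ = ‖v‖ ^ 4 * Real.exp (-(a / 2) * ‖v‖ ^ 2) := by ring
  have hdiff : ∀ᵐ v : E d ∂volume, ∀ b ∈ Metric.ball a (a / 2),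
      HasDerivAt (F · v) (F' b v) b := by
    refine Filter.Eventually.of_forall fun v => ?_
    intro b hb
    have hlin : HasDerivAt (fun b : ℝ => -b * ‖v‖ ^ 2) (-‖v‖ ^ 2) b := by
      simpa using (hasDerivAt_id b).neg.mul_const (‖v‖ ^ 2)
    exact hlin.exp.const_mul (‖v‖ ^ 2 * Real.cos (inner ℝ v c))
  have key := hasDerivAt_integral_of_dominated_loc_of_deriv_le (ball_mem_nhds a (half_pos ha))
      (Filter.Eventually.of_forall fun b => (hcont b).aestronglyMeasurable)
      hFint hcont'.aestronglyMeasurable hbound hbt hdiff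
  have heq : (fun b : ℝ => -((π / b) ^ ((d : ℝ) / 2) * Real.exp (-‖c‖ ^ 2 / (4 * b)) *
        (-(d : ℝ) / (2 * b) + ‖c‖ ^ 2 / (4 * b ^ 2))))
        =ᶠ[nhds a] (fun b => ∫ v : E d, F b v) := by
    filter_upwards [Ioi_mem_nhds ha] with b hb
    exact (L1_eq d c hb).symm
  have hD : HasDerivAt (fun b : ℝ => -((π / b) ^ ((d : ℝ) / 2) *
        Real.exp (-‖c‖ ^ 2 / (4 * b)) * (-(d : ℝ) / (2 * b) + ‖c‖ ^ 2 / (4 * b ^ 2))))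
      (∫ v : E d, F' a v) a := key.2.congr_of_eventuallyEq heq
  have huniq := hD.unique (hasDerivAt_phi1 d (‖c‖ ^ 2) ha)
  have hnn : ∫ v : E d, F' a v
      = -∫ v : E d, ‖v‖ ^ 4 * Real.cos (inner ℝ v c) * Real.exp (-a * ‖v‖ ^ 2) := by
    rw [← integral_neg]
    congr 1; funext v; simp only [hF']; ring
  rw [hnn] at huniq
  linarith [huniq]

theorem stmt_0 (d : ℕ) (hd : 1 ≤ d) (c : EuclideanSpace ℝ (Fin d)) (a : ℝ) (ha : 0 < a) :
    ∫ t : EuclideanSpace ℝ (Fin d),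
      (‖t‖ ^ 2 - (d : ℝ)) ^ 2 * Real.cos (inner ℝ t c) * Real.exp (-a * ‖t‖ ^ 2)
    = (π / a) ^ ((d : ℝ) / 2) *
        ((16 * d ^ 2 * a ^ 3 * (a - 1) + 4 * d * (d + 2) * a ^ 2
          + (8 * d * a ^ 2 - 4 * (d + 2) * a) * ‖c‖ ^ 2 + ‖c‖ ^ 4) / (16 * a ^ 4)) *
        Real.exp (-‖c‖ ^ 2 / (4 * a)) := by
  have hint4 : Integrable (fun v : E d =>
      ‖v‖ ^ 4 * Real.cos (inner ℝ v c) * Real.exp (-a * ‖v‖ ^ 2)) volume := by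
    simpa using integrable_pow_cos_exp_sq d 2 c ha
  have hint2 : Integrable (fun v : E d =>
      ‖v‖ ^ 2 * Real.cos (inner ℝ v c) * Real.exp (-a * ‖v‖ ^ 2)) volume := by
    simpa using integrable_pow_cos_exp_sq d 1 c ha
  have hint0 : Integrable (fun v : E d =>
      Real.cos (inner ℝ v c) * Real.exp (-a * ‖v‖ ^ 2)) volume := by
    simpa using integrable_pow_cos_exp_sq d 0 c ha
  have hsplit : ∫ t : E d,
        (‖t‖ ^ 2 - (d : ℝ)) ^ 2 * Real.cos (inner ℝ t c) * Real.exp (-a * ‖t‖ ^ 2)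
      = ∫ t : E d, (‖t‖ ^ 4 * Real.cos (inner ℝ t c) * Real.exp (-a * ‖t‖ ^ 2)
          + ((-2 * (d : ℝ)) * (‖t‖ ^ 2 * Real.cos (inner ℝ t c) * Real.exp (-a * ‖t‖ ^ 2))
            + ((d : ℝ) ^ 2) * (Real.cos (inner ℝ t c) * Real.exp (-a * ‖t‖ ^ 2)))) :=
    integral_congr_ae (Filter.Eventually.of_forall fun t => by ring)
  have hI1 : Integrable (fun t : E d =>
      (-2 * (d : ℝ)) * (‖t‖ ^ 2 * Real.cos (inner ℝ t c) * Real.exp (-a * ‖t‖ ^ 2))) volume :=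
    hint2.const_mul _
  have hI2 : Integrable (fun t : E d =>
      ((d : ℝ) ^ 2) * (Real.cos (inner ℝ t c) * Real.exp (-a * ‖t‖ ^ 2))) volume :=
    hint0.const_mul _
  have hI12 : Integrable (fun t : E d =>
      (-2 * (d : ℝ)) * (‖t‖ ^ 2 * Real.cos (inner ℝ t c) * Real.exp (-a * ‖t‖ ^ 2))
        + ((d : ℝ) ^ 2) * (Real.cos (inner ℝ t c) * Real.exp (-a * ‖t‖ ^ 2))) volume :=
    hI1.add hI2
  rw [hsplit, integral_add hint4 hI12, integral_add hI1 hI2,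
    integral_const_mul, integral_const_mul,
    L2_eq d c ha, L1_eq d c ha, base_integral d c ha]
  have ha' : a ≠ 0 := ha.ne'
  field_simp
  ring
end

section
/- For every c ∈ ℝ^d and a > 0, the integral over ℝ^d of (‖t‖² − d) · cos(tᵀc) · exp(−a‖t‖²) dt equals −(π/a)^(d/2) · (‖c‖²/(4a²) + d − d/(2a)) · exp(−‖c‖²/(4a)). -/
open MeasureTheory Real

private lemma lemA' (d : ℕ) (c : EuclideanSpace ℝ (Fin d)) {b : ℝ} (hb : 0 < b) :
    ∫ t : EuclideanSpace ℝ (Fin d), Real.cos (inner ℝ t c) * rexp (-b * ‖t‖ ^ 2)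
    = (π / b) ^ ((d : ℝ) / 2) * rexp (-‖c‖ ^ 2 / (4 * b)) := by
  have hbc : (0:ℝ) < ((b:ℂ)).re := hb
  have key := GaussianFourier.integral_cexp_neg_mul_sq_norm_add
    (V := EuclideanSpace ℝ (Fin d)) hbc Complex.I c
  have hint := GaussianFourier.integrable_cexp_neg_mul_sq_norm_add
    (V := EuclideanSpace ℝ (Fin d)) hbc Complex.I c
  have h1 : ∀ v : EuclideanSpace ℝ (Fin d),
      Real.cos (inner ℝ v c) * rexp (-b * ‖v‖ ^ 2)
      = (Complex.exp (-(b:ℂ) * (‖v‖:ℂ) ^ 2 + Complex.I * ((inner ℝ c v : ℝ) : ℂ))).re := by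
    intro v
    rw [Complex.exp_re]
    simp [← Complex.ofReal_pow, real_inner_comm, mul_comm]
  calc ∫ t : EuclideanSpace ℝ (Fin d), Real.cos (inner ℝ t c) * rexp (-b * ‖t‖ ^ 2)
      = ∫ t : EuclideanSpace ℝ (Fin d),
          (Complex.exp (-(b:ℂ) * (‖t‖:ℂ) ^ 2 + Complex.I * ((inner ℝ c t : ℝ) : ℂ))).re := by
        simp_rw [h1]
    _ = (∫ t : EuclideanSpace ℝ (Fin d),
          Complex.exp (-(b:ℂ) * (‖t‖:ℂ) ^ 2 + Complex.I * ((inner ℝ c t : ℝ) : ℂ))).re := by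
        simp_rw [← RCLike.re_to_complex]
        rw [integral_re hint]
    _ = (π / b) ^ ((d : ℝ) / 2) * rexp (-‖c‖ ^ 2 / (4 * b)) := by
        rw [key]
        have h2 : ((π / b : ℂ)) ^ ((Module.finrank ℝ (EuclideanSpace ℝ (Fin d))) / 2 : ℂ)
            = (((π / b) ^ ((d : ℝ) / 2) : ℝ) : ℂ) := by
          rw [Complex.ofReal_cpow (by positivity)]
          norm_num [finrank_euclideanSpace_fin]
        have h3 : Complex.exp (Complex.I ^ 2 * (‖c‖:ℂ) ^ 2 / (4 * (b:ℂ)))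
            = ((rexp (-‖c‖ ^ 2 / (4 * b)) : ℝ) : ℂ) := by
          rw [Complex.I_sq,
            show (-1 : ℂ) * (‖c‖:ℂ) ^ 2 / (4 * (b:ℂ)) = ((-‖c‖ ^ 2 / (4 * b) : ℝ) : ℂ) by
              push_cast; ring,
            ← Complex.ofReal_exp]
        rw [h2, h3, ← Complex.ofReal_mul, Complex.ofReal_re]

private lemma lemB' (d : ℕ) {b : ℝ} (hb : 0 < b) :
    Integrable (fun v : EuclideanSpace ℝ (Fin d) => rexp (-b * ‖v‖ ^ 2)) := by
  have h := (GaussianFourier.integrable_cexp_neg_mul_sq_norm_add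
    (V := EuclideanSpace ℝ (Fin d)) (show (0:ℝ) < ((b:ℂ)).re from hb) 0 0).norm
  convert h using 2 with v
  simp [Complex.norm_exp, ← Complex.ofReal_pow]

private lemma lemC' (d : ℕ) {b : ℝ} (hb : 0 < b) :
    Integrable (fun v : EuclideanSpace ℝ (Fin d) => ‖v‖ ^ 2 * rexp (-b * ‖v‖ ^ 2)) := by
  apply Integrable.mono' (((lemB' d (half_pos hb)).const_mul (2 / b)))
  · apply Continuous.aestronglyMeasurable
    continuity
  · filter_upwards with v
    rw [Real.norm_eq_abs, _root_.abs_of_nonneg (by positivity)]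
    set y : ℝ := (b / 2) * ‖v‖ ^ 2 with hy
    have h1 : y ≤ rexp y := by linarith [Real.add_one_le_exp y]
    have h2 : y * rexp (-y) ≤ 1 := by
      calc y * rexp (-y) ≤ rexp y * rexp (-y) :=
            mul_le_mul_of_nonneg_right h1 (Real.exp_nonneg _)
        _ = 1 := by rw [← Real.exp_add]; simp
    have hv : ‖v‖ ^ 2 = (2 / b) * y := by rw [hy]; field_simp
    calc ‖v‖ ^ 2 * rexp (-b * ‖v‖ ^ 2)
        = (2 / b) * ((y * rexp (-y)) * rexp (-(b/2) * ‖v‖ ^ 2)) := by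
          rw [show -b * ‖v‖ ^ 2 = -y + (-(b/2) * ‖v‖ ^ 2) by rw [hy]; ring,
            Real.exp_add, hv]; ring
      _ ≤ (2 / b) * (1 * rexp (-(b/2) * ‖v‖ ^ 2)) := by
          apply mul_le_mul_of_nonneg_left _ (by positivity)
          exact mul_le_mul_of_nonneg_right h2 (Real.exp_nonneg _)
      _ = 2 / b * rexp (-(b/2) * ‖v‖ ^ 2) := by ring

private lemma lemD' (d : ℕ) (c : EuclideanSpace ℝ (Fin d)) {a : ℝ} (ha : 0 < a) :
    HasDerivAt (fun b : ℝ => ∫ t : EuclideanSpace ℝ (Fin d),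
        Real.cos (inner ℝ t c) * rexp (-b * ‖t‖ ^ 2))
      (∫ t : EuclideanSpace ℝ (Fin d),
        Real.cos (inner ℝ t c) * (-‖t‖ ^ 2 * rexp (-a * ‖t‖ ^ 2))) a := by
  set F : ℝ → EuclideanSpace ℝ (Fin d) → ℝ := fun b t =>
    Real.cos (inner ℝ t c) * rexp (-b * ‖t‖ ^ 2) with hF
  set F' : ℝ → EuclideanSpace ℝ (Fin d) → ℝ := fun b t =>
    Real.cos (inner ℝ t c) * (-‖t‖ ^ 2 * rexp (-b * ‖t‖ ^ 2)) with hF'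
  have hcont : ∀ b : ℝ, Continuous (F b) := by
    intro b; apply Continuous.mul
    · exact Real.continuous_cos.comp (continuous_id.inner continuous_const)
    · exact Real.continuous_exp.comp (continuous_const.mul (continuous_norm.pow 2))
  have hcont' : ∀ b : ℝ, Continuous (F' b) := by
    intro b; apply Continuous.mul
    · exact Real.continuous_cos.comp (continuous_id.inner continuous_const)
    · exact ((continuous_norm.pow 2).neg).mul
        (Real.continuous_exp.comp (continuous_const.mul (continuous_norm.pow 2)))
  have key := hasDerivAt_integral_of_dominated_loc_of_deriv_le (μ := volume)
    (F := F) (F' := F') (x₀ := a)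
    (bound := fun t => ‖t‖ ^ 2 * rexp (-(a/2) * ‖t‖ ^ 2))
    (Metric.ball_mem_nhds a (half_pos ha))
    (Filter.Eventually.of_forall fun b => (hcont b).aestronglyMeasurable)
    ?_ ((hcont' a).aestronglyMeasurable) ?_ (lemC' d (half_pos ha)) ?_
  · exact key.2
  · apply Integrable.mono' (lemB' d ha) (hcont a).aestronglyMeasurable
    filter_upwards with t
    rw [Real.norm_eq_abs, hF, abs_mul, _root_.abs_of_nonneg (Real.exp_nonneg _)]
    exact mul_le_of_le_one_left (Real.exp_nonneg _) (abs_cos_le_one _)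
  · filter_upwards with t b hb
    have hba : a / 2 ≤ b := by
      have := abs_lt.mp (mem_ball_iff_norm.mp hb)
      linarith [this.1]
    rw [Real.norm_eq_abs, hF', abs_mul, abs_mul, abs_neg,
      _root_.abs_of_nonneg (sq_nonneg ‖t‖), _root_.abs_of_nonneg (Real.exp_nonneg _)]
    calc |Real.cos (inner ℝ t c)| * (‖t‖ ^ 2 * rexp (-b * ‖t‖ ^ 2))
        ≤ 1 * (‖t‖ ^ 2 * rexp (-b * ‖t‖ ^ 2)) := by
          apply mul_le_mul_of_nonneg_right (abs_cos_le_one _) (by positivity)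
      _ = ‖t‖ ^ 2 * rexp (-b * ‖t‖ ^ 2) := one_mul _
      _ ≤ ‖t‖ ^ 2 * rexp (-(a/2) * ‖t‖ ^ 2) := by
          apply mul_le_mul_of_nonneg_left _ (sq_nonneg _)
          exact Real.exp_le_exp.mpr (by nlinarith [sq_nonneg ‖t‖])
  · filter_upwards with t b _
    have h1 : HasDerivAt (fun b : ℝ => -b * ‖t‖ ^ 2) (-‖t‖ ^ 2) b := by
      simpa using ((hasDerivAt_id b).neg.mul_const (‖t‖ ^ 2))
    have h2 := (h1.exp).const_mul (Real.cos (inner ℝ t c))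
    simpa [hF, hF', mul_comm] using h2

private lemma lemE' (d : ℕ) (k : ℝ) {a : ℝ} (ha : 0 < a) :
    HasDerivAt (fun b : ℝ => (π / b) ^ ((d : ℝ) / 2) * rexp (-k / (4 * b)))
      ((π / a) ^ ((d : ℝ) / 2) * rexp (-k / (4 * a)) * (k / (4 * a ^ 2) - d / (2 * a))) a := by
  set p : ℝ := (d : ℝ) / 2 with hp
  have heq : ∀ b : ℝ, 0 < b → π ^ p * (b ^ (-p) * rexp (-(k / 4) * b⁻¹))
      = (π / b) ^ p * rexp (-k / (4 * b)) := by
    intro b hb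
    rw [show -(k / 4) * b⁻¹ = -k / (4 * b) by field_simp,
      Real.div_rpow pi_pos.le hb.le, Real.rpow_neg hb.le]
    ring
  have h1 : HasDerivAt (fun b : ℝ => b ^ (-p)) (-p * a ^ (-p - 1)) a :=
    Real.hasDerivAt_rpow_const (Or.inl (ne_of_gt ha))
  have h2 : HasDerivAt (fun b : ℝ => -(k / 4) * b⁻¹) (-(k / 4) * -(a ^ 2)⁻¹) a :=
    (hasDerivAt_inv (ne_of_gt ha)).const_mul _
  have h3 := (h1.mul h2.exp).const_mul (π ^ p)
  have h4 : HasDerivAt (fun b : ℝ => (π / b) ^ p * rexp (-k / (4 * b)))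
      (π ^ p * (-p * a ^ (-p - 1) * rexp (-(k / 4) * a⁻¹)
        + a ^ (-p) * (rexp (-(k / 4) * a⁻¹) * (-(k / 4) * -(a ^ 2)⁻¹)))) a := by
    apply h3.congr_of_eventuallyEq
    filter_upwards [eventually_gt_nhds ha] with b hb
    exact (heq b hb).symm
  convert h4 using 1
  rw [← heq a ha, show (-p - 1 : ℝ) = -p + (-1) by ring, Real.rpow_add ha, Real.rpow_neg_one,
    show -(k / 4) * a⁻¹ = -k / (4 * a) by field_simp, hp]
  field_simp
  ring

theorem stmt_2 (d : ℕ) (hd : 1 ≤ d) (c : EuclideanSpace ℝ (Fin d)) (a : ℝ) (ha : 0 < a) :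
    ∫ t : EuclideanSpace ℝ (Fin d),
      (‖t‖ ^ 2 - (d : ℝ)) * Real.cos (inner ℝ t c) * Real.exp (-a * ‖t‖ ^ 2)
    = -((π / a) ^ ((d : ℝ) / 2)) * (‖c‖ ^ 2 / (4 * a ^ 2) + d - d / (2 * a)) *
        Real.exp (-‖c‖ ^ 2 / (4 * a)) := by
  have hg : HasDerivAt (fun b : ℝ => (π / b) ^ ((d : ℝ) / 2) * rexp (-‖c‖ ^ 2 / (4 * b)))
      (∫ t : EuclideanSpace ℝ (Fin d),
        Real.cos (inner ℝ t c) * (-‖t‖ ^ 2 * rexp (-a * ‖t‖ ^ 2))) a := by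
    apply (lemD' d c ha).congr_of_eventuallyEq
    filter_upwards [eventually_gt_nhds ha] with b hb
    exact (lemA' d c hb).symm
  have hD := (lemE' d (‖c‖ ^ 2) ha).unique hg
  -- hD : (π/a)^(d/2) * rexp(..) * (‖c‖²/(4a²) - d/(2a)) = ∫ cos * (-‖t‖² * exp)
  have hcos_cont : Continuous (fun t : EuclideanSpace ℝ (Fin d) =>
      Real.cos (inner ℝ t c) * rexp (-a * ‖t‖ ^ 2)) := by
    apply Continuous.mul
    · exact Real.continuous_cos.comp (continuous_id.inner continuous_const)
    · exact Real.continuous_exp.comp (continuous_const.mul (continuous_norm.pow 2))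
  have hi1 : Integrable (fun t : EuclideanSpace ℝ (Fin d) =>
      Real.cos (inner ℝ t c) * rexp (-a * ‖t‖ ^ 2)) := by
    apply Integrable.mono' (lemB' d ha) hcos_cont.aestronglyMeasurable
    filter_upwards with t
    rw [Real.norm_eq_abs, abs_mul, _root_.abs_of_nonneg (Real.exp_nonneg _)]
    exact mul_le_of_le_one_left (Real.exp_nonneg _) (abs_cos_le_one _)
  have hi2 : Integrable (fun t : EuclideanSpace ℝ (Fin d) =>
      Real.cos (inner ℝ t c) * (-‖t‖ ^ 2 * rexp (-a * ‖t‖ ^ 2))) := by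
    apply Integrable.mono' (lemC' d ha)
    · exact (Real.continuous_cos.comp (continuous_id.inner continuous_const)).mul
        (((continuous_norm.pow 2).neg).mul
          (Real.continuous_exp.comp
            (continuous_const.mul (continuous_norm.pow 2)))) |>.aestronglyMeasurable
    · filter_upwards with t
      rw [Real.norm_eq_abs, abs_mul, abs_mul, abs_neg,
        _root_.abs_of_nonneg (sq_nonneg ‖t‖), _root_.abs_of_nonneg (Real.exp_nonneg _)]
      calc |Real.cos (inner ℝ t c)| * (‖t‖ ^ 2 * rexp (-a * ‖t‖ ^ 2))
          ≤ 1 * (‖t‖ ^ 2 * rexp (-a * ‖t‖ ^ 2)) :=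
            mul_le_mul_of_nonneg_right (abs_cos_le_one _) (by positivity)
        _ = ‖t‖ ^ 2 * rexp (-a * ‖t‖ ^ 2) := one_mul _
  have hsplit : ∀ t : EuclideanSpace ℝ (Fin d),
      (‖t‖ ^ 2 - (d : ℝ)) * Real.cos (inner ℝ t c) * rexp (-a * ‖t‖ ^ 2)
      = -(Real.cos (inner ℝ t c) * (-‖t‖ ^ 2 * rexp (-a * ‖t‖ ^ 2)))
        - (d : ℝ) * (Real.cos (inner ℝ t c) * rexp (-a * ‖t‖ ^ 2)) := by
    intro t; ring
  calc ∫ t : EuclideanSpace ℝ (Fin d),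
        (‖t‖ ^ 2 - (d : ℝ)) * Real.cos (inner ℝ t c) * rexp (-a * ‖t‖ ^ 2)
      = ∫ t : EuclideanSpace ℝ (Fin d),
          (-(Real.cos (inner ℝ t c) * (-‖t‖ ^ 2 * rexp (-a * ‖t‖ ^ 2)))
            - (d : ℝ) * (Real.cos (inner ℝ t c) * rexp (-a * ‖t‖ ^ 2))) := by
        simp_rw [hsplit]
    _ = -(∫ t : EuclideanSpace ℝ (Fin d),
            Real.cos (inner ℝ t c) * (-‖t‖ ^ 2 * rexp (-a * ‖t‖ ^ 2)))
        - (d : ℝ) * ∫ t : EuclideanSpace ℝ (Fin d),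
            Real.cos (inner ℝ t c) * rexp (-a * ‖t‖ ^ 2) := by
        have hi2n : Integrable (fun t : EuclideanSpace ℝ (Fin d) =>
            -(Real.cos (inner ℝ t c) * (-‖t‖ ^ 2 * rexp (-a * ‖t‖ ^ 2)))) volume := hi2.neg
        rw [integral_sub hi2n (hi1.const_mul _), integral_neg, MeasureTheory.integral_const_mul]
    _ = -((π / a) ^ ((d : ℝ) / 2) * rexp (-‖c‖ ^ 2 / (4 * a))
          * (‖c‖ ^ 2 / (4 * a ^ 2) - d / (2 * a)))
        - (d : ℝ) * ((π / a) ^ ((d : ℝ) / 2) * rexp (-‖c‖ ^ 2 / (4 * a))) := by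
        rw [← hD, lemA' d c ha]
    _ = -((π / a) ^ ((d : ℝ) / 2)) * (‖c‖ ^ 2 / (4 * a ^ 2) + d - d / (2 * a)) *
        rexp (-‖c‖ ^ 2 / (4 * a)) := by ring
end

section
/- Fix n, d ≥ 1 and vectors Y_1, …, Y_n ∈ ℝ^d with Σ_{j=1}^n Y_j = 0 and Σ_{j=1}^n Y_j Y_jᵀ = n·I_d. With U_{n,a} as in the closed-form representation, lim_{a→∞} (2/(n·π^{d/2})) · a^{d/2+1} · U_{n,a} = (1/n²)·Σ_{j,k=1}^n ‖Y_j‖² ‖Y_k‖² (Y_jᵀ Y_k). -/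
open Real Filter

private lemma lim_exp_zero' (c : ℝ) :
    Tendsto (fun a : ℝ => Real.exp (-c / (4 * a))) atTop (nhds 1) := by
  have h : Tendsto (fun a : ℝ => -c / (4 * a)) atTop (nhds 0) := by
    have h2 : Tendsto (fun a : ℝ => (-c / 4) * a⁻¹) atTop (nhds ((-c / 4) * 0)) :=
      tendsto_inv_atTop_zero.const_mul _
    simpa [mul_comm, div_eq_mul_inv, mul_inv, mul_assoc, mul_left_comm] using h2
  simpa [Function.comp_def] using (Real.continuous_exp.tendsto 0).comp h

private lemma lim_slope' (c : ℝ) :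
    Tendsto (fun a : ℝ => a * (Real.exp (-c / (4 * a)) - 1)) atTop (nhds (-c / 4)) := by
  have hd : HasDerivAt (fun x : ℝ => Real.exp (-c / 4 * x)) (-c / 4) 0 := by
    have := ((hasDerivAt_id (0 : ℝ)).const_mul (-c / 4)).exp
    simpa using this
  have hs := hasDerivAt_iff_tendsto_slope.mp hd
  have hinv : Tendsto (fun a : ℝ => a⁻¹) atTop (nhdsWithin 0 {(0 : ℝ)}ᶜ) := by
    apply Tendsto.mono_right tendsto_inv_atTop_nhdsGT_zero
    exact nhdsWithin_mono 0 (fun y hy => ne_of_gt hy)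
  have := hs.comp hinv
  refine this.congr (fun a => ?_)
  simp [slope_def_field, div_eq_mul_inv]
  ring_nf

private lemma sum_quad' {m : ℕ} (f g : Fin m → ℝ) (A B C : ℝ)
    (h : ∀ k, g k = A + B * f k + C * f k ^ 2) :
    ∑ k, g k = m * A + B * (∑ k, f k) + C * (∑ k, f k ^ 2) := by
  rw [Finset.sum_congr rfl fun k _ => h k, Finset.sum_add_distrib, Finset.sum_add_distrib,
    ← Finset.mul_sum, ← Finset.mul_sum, Finset.sum_const, Finset.card_univ, Fintype.card_fin,
    nsmul_eq_mul]

private lemma pair' (a E u sj sk D : ℝ) (ha : a ≠ 0) :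
    a * (sj * sk * E - (sj + sk) * (1 / (4 * a ^ 2)) * (u ^ 2 + 2 * a * D * (2 * a - 1)) * E
      + 1 / (16 * a ^ 4) * E * (16 * D ^ 2 * a ^ 3 * (a - 1) + 4 * D * (D + 2) * a ^ 2 + u ^ 4
        + (8 * D * a ^ 2 - 4 * (D + 2) * a) * u ^ 2))
    = (E * ((sj + sk) * D / 2 - D ^ 2
        + (-((sj + sk) * u ^ 2) / 4 + D * (D + 2) / 4 + D * u ^ 2 / 2) * a⁻¹
        + (-(D + 2) * u ^ 2 / 4) * a⁻¹ ^ 2 + (u ^ 2) ^ 2 / 16 * a⁻¹ ^ 3)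
      + (sj * sk - (sj + sk) * D + D ^ 2) * (a * (E - 1)))
      + (sj * sk - (sj + sk) * D + D ^ 2) * a := by
  field_simp
  ring

private lemma scalar' (n' pq aq a S : ℝ) (hn : n' ≠ 0) (hp : pq ≠ 0) (haq : aq ≠ 0) :
    2 / (n' * pq) * (aq * a) * (pq / aq * (1 / n') * S) = 2 / n' ^ 2 * (a * S) := by
  field_simp

set_option maxHeartbeats 1000000

theorem stmt_9 (d n : ℕ) (hd : 1 ≤ d) (hn : 1 ≤ n)
    (Y : Fin n → EuclideanSpace ℝ (Fin d))
    (hsum : ∑ j, Y j = 0)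
    (hcov : ∀ i k : Fin d, ∑ j, Y j i * Y j k = if i = k then (n : ℝ) else 0)
    (U : ℝ → ℝ)
    (hU : ∀ a : ℝ, 0 < a → U a =
      (π / a) ^ ((d : ℝ) / 2) * (1 / n) * ∑ j, ∑ k,
        (‖Y j‖ ^ 2 * ‖Y k‖ ^ 2 * Real.exp (-‖Y j - Y k‖ ^ 2 / (4 * a))
         - (‖Y j‖ ^ 2 + ‖Y k‖ ^ 2) * (1 / (4 * a ^ 2)) *
             (‖Y j - Y k‖ ^ 2 + 2 * a * d * (2 * a - 1)) *
             Real.exp (-‖Y j - Y k‖ ^ 2 / (4 * a))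
         + (1 / (16 * a ^ 4)) * Real.exp (-‖Y j - Y k‖ ^ 2 / (4 * a)) *
             (16 * d ^ 2 * a ^ 3 * (a - 1) + 4 * d * (d + 2) * a ^ 2
              + ‖Y j - Y k‖ ^ 4 + (8 * d * a ^ 2 - 4 * (d + 2) * a) * ‖Y j - Y k‖ ^ 2))) :
    Tendsto (fun a : ℝ => 2 / (n * π ^ ((d : ℝ) / 2)) * a ^ ((d : ℝ) / 2 + 1) * U a)
      atTop
      (nhds ((1 / (n : ℝ) ^ 2) * ∑ j, ∑ k,
        ‖Y j‖ ^ 2 * ‖Y k‖ ^ 2 * (inner ℝ (Y j) (Y k) : ℝ))) := by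
  have hn0 : (n : ℝ) ≠ 0 := Nat.cast_ne_zero.mpr (by omega)
  -- basic moment identities
  have hS1 : ∑ j, ‖Y j‖ ^ 2 = (n : ℝ) * d := by
    have h : ∀ j, ‖Y j‖ ^ 2 = ∑ i, Y j i * Y j i := by
      intro j
      rw [EuclideanSpace.norm_eq, Real.sq_sqrt (by positivity)]
      simp [Real.norm_eq_abs, sq]
    calc ∑ j, ‖Y j‖ ^ 2 = ∑ j, ∑ i, Y j i * Y j i := by simp [h]
      _ = ∑ i : Fin d, ∑ j, Y j i * Y j i := Finset.sum_comm
      _ = ∑ _i : Fin d, (n : ℝ) := by simp [hcov]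
      _ = (n : ℝ) * d := by simp [mul_comm]
  have hipr : ∀ j, ∑ k, (inner ℝ (Y j) (Y k) : ℝ) = 0 := by
    intro j; rw [← inner_sum, hsum, inner_zero_right]
  have hipl : ∀ k, ∑ j, (inner ℝ (Y j) (Y k) : ℝ) = 0 := by
    intro k; rw [← sum_inner, hsum, inner_zero_left]
  -- the leading coefficient sums to zero
  have hCm1 : ∑ j, ∑ k,
      (‖Y j‖ ^ 2 * ‖Y k‖ ^ 2 - (‖Y j‖ ^ 2 + ‖Y k‖ ^ 2) * (d : ℝ) + (d : ℝ) ^ 2) = 0 := by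
    have hin : ∀ j : Fin n,
        ∑ k, (‖Y j‖ ^ 2 * ‖Y k‖ ^ 2 - (‖Y j‖ ^ 2 + ‖Y k‖ ^ 2) * (d : ℝ) + (d : ℝ) ^ 2)
          = (n : ℝ) * ((d : ℝ) ^ 2 - ‖Y j‖ ^ 2 * d) + (‖Y j‖ ^ 2 - d) * (∑ k, ‖Y k‖ ^ 2)
            + 0 * (∑ k, (‖Y k‖ ^ 2) ^ 2) :=
      fun j => sum_quad' _ _ _ _ _ (fun k => by ring)
    rw [Finset.sum_congr rfl fun j _ => hin j, hS1]
    have hz : ∀ j : Fin n,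
        (n : ℝ) * ((d : ℝ) ^ 2 - ‖Y j‖ ^ 2 * d) + (‖Y j‖ ^ 2 - d) * ((n : ℝ) * d)
          + 0 * (∑ k, (‖Y k‖ ^ 2) ^ 2) = 0 := fun j => by ring
    rw [Finset.sum_congr rfl fun j _ => hz j, Finset.sum_const_zero]
  -- the limit of the double sum
  have hlim : Tendsto (fun a : ℝ => ∑ j, ∑ k,
      (Real.exp (-‖Y j - Y k‖ ^ 2 / (4 * a)) *
        ((‖Y j‖ ^ 2 + ‖Y k‖ ^ 2) * (d : ℝ) / 2 - (d : ℝ) ^ 2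
          + (-((‖Y j‖ ^ 2 + ‖Y k‖ ^ 2) * ‖Y j - Y k‖ ^ 2) / 4 + (d : ℝ) * ((d : ℝ) + 2) / 4
              + (d : ℝ) * ‖Y j - Y k‖ ^ 2 / 2) * a⁻¹
          + (-((d : ℝ) + 2) * ‖Y j - Y k‖ ^ 2 / 4) * a⁻¹ ^ 2
          + (‖Y j - Y k‖ ^ 2) ^ 2 / 16 * a⁻¹ ^ 3)
       + (‖Y j‖ ^ 2 * ‖Y k‖ ^ 2 - (‖Y j‖ ^ 2 + ‖Y k‖ ^ 2) * (d : ℝ) + (d : ℝ) ^ 2) *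
           (a * (Real.exp (-‖Y j - Y k‖ ^ 2 / (4 * a)) - 1))))
      atTop (nhds (∑ j, ∑ k,
        ((‖Y j‖ ^ 2 + ‖Y k‖ ^ 2) * (d : ℝ) / 2 - (d : ℝ) ^ 2
          - (‖Y j‖ ^ 2 * ‖Y k‖ ^ 2 - (‖Y j‖ ^ 2 + ‖Y k‖ ^ 2) * (d : ℝ) + (d : ℝ) ^ 2)
            * ‖Y j - Y k‖ ^ 2 / 4))) := by
    refine tendsto_finset_sum _ fun j _ => tendsto_finset_sum _ fun k _ => ?_
    have h1 := lim_exp_zero' (‖Y j - Y k‖ ^ 2)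
    have h2 : Tendsto (fun a : ℝ => a⁻¹) atTop (nhds 0) := tendsto_inv_atTop_zero
    have h3 := lim_slope' (‖Y j - Y k‖ ^ 2)
    have hpoly : Tendsto (fun a : ℝ =>
        (‖Y j‖ ^ 2 + ‖Y k‖ ^ 2) * (d : ℝ) / 2 - (d : ℝ) ^ 2
          + (-((‖Y j‖ ^ 2 + ‖Y k‖ ^ 2) * ‖Y j - Y k‖ ^ 2) / 4 + (d : ℝ) * ((d : ℝ) + 2) / 4
              + (d : ℝ) * ‖Y j - Y k‖ ^ 2 / 2) * a⁻¹
          + (-((d : ℝ) + 2) * ‖Y j - Y k‖ ^ 2 / 4) * a⁻¹ ^ 2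
          + (‖Y j - Y k‖ ^ 2) ^ 2 / 16 * a⁻¹ ^ 3) atTop
        (nhds ((‖Y j‖ ^ 2 + ‖Y k‖ ^ 2) * (d : ℝ) / 2 - (d : ℝ) ^ 2
          + (-((‖Y j‖ ^ 2 + ‖Y k‖ ^ 2) * ‖Y j - Y k‖ ^ 2) / 4 + (d : ℝ) * ((d : ℝ) + 2) / 4
              + (d : ℝ) * ‖Y j - Y k‖ ^ 2 / 2) * 0
          + (-((d : ℝ) + 2) * ‖Y j - Y k‖ ^ 2 / 4) * 0 ^ 2
          + (‖Y j - Y k‖ ^ 2) ^ 2 / 16 * 0 ^ 3)) := by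
      exact ((tendsto_const_nhds.add (h2.const_mul _)).add
        ((h2.pow 2).const_mul _)).add ((h2.pow 3).const_mul _)
    have h := (h1.mul hpoly).add (h3.const_mul
      (‖Y j‖ ^ 2 * ‖Y k‖ ^ 2 - (‖Y j‖ ^ 2 + ‖Y k‖ ^ 2) * (d : ℝ) + (d : ℝ) ^ 2))
    have hv : (‖Y j‖ ^ 2 + ‖Y k‖ ^ 2) * (d : ℝ) / 2 - (d : ℝ) ^ 2
          - (‖Y j‖ ^ 2 * ‖Y k‖ ^ 2 - (‖Y j‖ ^ 2 + ‖Y k‖ ^ 2) * (d : ℝ) + (d : ℝ) ^ 2)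
            * ‖Y j - Y k‖ ^ 2 / 4
        = 1 * ((‖Y j‖ ^ 2 + ‖Y k‖ ^ 2) * (d : ℝ) / 2 - (d : ℝ) ^ 2
          + (-((‖Y j‖ ^ 2 + ‖Y k‖ ^ 2) * ‖Y j - Y k‖ ^ 2) / 4 + (d : ℝ) * ((d : ℝ) + 2) / 4
              + (d : ℝ) * ‖Y j - Y k‖ ^ 2 / 2) * 0
          + (-((d : ℝ) + 2) * ‖Y j - Y k‖ ^ 2 / 4) * 0 ^ 2
          + (‖Y j - Y k‖ ^ 2) ^ 2 / 16 * 0 ^ 3)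
          + (‖Y j‖ ^ 2 * ‖Y k‖ ^ 2 - (‖Y j‖ ^ 2 + ‖Y k‖ ^ 2) * (d : ℝ) + (d : ℝ) ^ 2)
            * (-‖Y j - Y k‖ ^ 2 / 4) := by ring
    rw [hv]
    exact h.congr (fun a => by ring)
  -- identify the limit value
  have hL : (∑ j, ∑ k,
        ((‖Y j‖ ^ 2 + ‖Y k‖ ^ 2) * (d : ℝ) / 2 - (d : ℝ) ^ 2
          - (‖Y j‖ ^ 2 * ‖Y k‖ ^ 2 - (‖Y j‖ ^ 2 + ‖Y k‖ ^ 2) * (d : ℝ) + (d : ℝ) ^ 2)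
            * ‖Y j - Y k‖ ^ 2 / 4))
      = (1 / 2) * ∑ j, ∑ k, (‖Y j‖ ^ 2 * ‖Y k‖ ^ 2 * (inner ℝ (Y j) (Y k) : ℝ)) := by
    have hdecomp : ∀ j k : Fin n,
        (‖Y j‖ ^ 2 + ‖Y k‖ ^ 2) * (d : ℝ) / 2 - (d : ℝ) ^ 2
          - (‖Y j‖ ^ 2 * ‖Y k‖ ^ 2 - (‖Y j‖ ^ 2 + ‖Y k‖ ^ 2) * (d : ℝ) + (d : ℝ) ^ 2)
            * ‖Y j - Y k‖ ^ 2 / 4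
        = ((‖Y j‖ ^ 2 + ‖Y k‖ ^ 2) * (d : ℝ) / 2 - (d : ℝ) ^ 2
            - (‖Y j‖ ^ 2 * ‖Y k‖ ^ 2 - (‖Y j‖ ^ 2 + ‖Y k‖ ^ 2) * (d : ℝ) + (d : ℝ) ^ 2)
              * (‖Y j‖ ^ 2 + ‖Y k‖ ^ 2) / 4)
          + ((d : ℝ) ^ 2 / 2 - (d : ℝ) * ‖Y j‖ ^ 2 / 2) * (inner ℝ (Y j) (Y k) : ℝ)
          + (-(d : ℝ) / 2) * (‖Y k‖ ^ 2 * (inner ℝ (Y j) (Y k) : ℝ))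
          + (1 / 2) * (‖Y j‖ ^ 2 * ‖Y k‖ ^ 2 * (inner ℝ (Y j) (Y k) : ℝ)) := by
      intro j k
      rw [norm_sub_sq_real]
      ring
    rw [Finset.sum_congr rfl fun j _ => Finset.sum_congr rfl fun k _ => hdecomp j k]
    have hsplit : ∀ j : Fin n, ∑ k, (((‖Y j‖ ^ 2 + ‖Y k‖ ^ 2) * (d : ℝ) / 2 - (d : ℝ) ^ 2
            - (‖Y j‖ ^ 2 * ‖Y k‖ ^ 2 - (‖Y j‖ ^ 2 + ‖Y k‖ ^ 2) * (d : ℝ) + (d : ℝ) ^ 2)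
              * (‖Y j‖ ^ 2 + ‖Y k‖ ^ 2) / 4)
          + ((d : ℝ) ^ 2 / 2 - (d : ℝ) * ‖Y j‖ ^ 2 / 2) * (inner ℝ (Y j) (Y k) : ℝ)
          + (-(d : ℝ) / 2) * (‖Y k‖ ^ 2 * (inner ℝ (Y j) (Y k) : ℝ))
          + (1 / 2) * (‖Y j‖ ^ 2 * ‖Y k‖ ^ 2 * (inner ℝ (Y j) (Y k) : ℝ)))
        = (∑ k, ((‖Y j‖ ^ 2 + ‖Y k‖ ^ 2) * (d : ℝ) / 2 - (d : ℝ) ^ 2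
            - (‖Y j‖ ^ 2 * ‖Y k‖ ^ 2 - (‖Y j‖ ^ 2 + ‖Y k‖ ^ 2) * (d : ℝ) + (d : ℝ) ^ 2)
              * (‖Y j‖ ^ 2 + ‖Y k‖ ^ 2) / 4))
          + (∑ k, ((d : ℝ) ^ 2 / 2 - (d : ℝ) * ‖Y j‖ ^ 2 / 2) * (inner ℝ (Y j) (Y k) : ℝ))
          + (∑ k, (-(d : ℝ) / 2) * (‖Y k‖ ^ 2 * (inner ℝ (Y j) (Y k) : ℝ)))
          + (∑ k, (1 / 2) * (‖Y j‖ ^ 2 * ‖Y k‖ ^ 2 * (inner ℝ (Y j) (Y k) : ℝ))) := by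
      intro j
      rw [Finset.sum_add_distrib, Finset.sum_add_distrib, Finset.sum_add_distrib]
    rw [Finset.sum_congr rfl fun j _ => hsplit j]
    rw [Finset.sum_add_distrib, Finset.sum_add_distrib, Finset.sum_add_distrib]
    have hP0 : ∑ j, ∑ k, ((‖Y j‖ ^ 2 + ‖Y k‖ ^ 2) * (d : ℝ) / 2 - (d : ℝ) ^ 2
            - (‖Y j‖ ^ 2 * ‖Y k‖ ^ 2 - (‖Y j‖ ^ 2 + ‖Y k‖ ^ 2) * (d : ℝ) + (d : ℝ) ^ 2)
              * (‖Y j‖ ^ 2 + ‖Y k‖ ^ 2) / 4) = 0 := by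
      have hin : ∀ j : Fin n, ∑ k, ((‖Y j‖ ^ 2 + ‖Y k‖ ^ 2) * (d : ℝ) / 2 - (d : ℝ) ^ 2
            - (‖Y j‖ ^ 2 * ‖Y k‖ ^ 2 - (‖Y j‖ ^ 2 + ‖Y k‖ ^ 2) * (d : ℝ) + (d : ℝ) ^ 2)
              * (‖Y j‖ ^ 2 + ‖Y k‖ ^ 2) / 4)
          = (n : ℝ) * ((d : ℝ) / 2 * ‖Y j‖ ^ 2 - (d : ℝ) ^ 2 + (d : ℝ) / 4 * (‖Y j‖ ^ 2) ^ 2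
              - (d : ℝ) ^ 2 / 4 * ‖Y j‖ ^ 2)
            + ((d : ℝ) / 2 + (d : ℝ) / 2 * ‖Y j‖ ^ 2 - (d : ℝ) ^ 2 / 4 - (‖Y j‖ ^ 2) ^ 2 / 4)
              * (∑ k, ‖Y k‖ ^ 2)
            + ((d : ℝ) / 4 - ‖Y j‖ ^ 2 / 4) * (∑ k, (‖Y k‖ ^ 2) ^ 2) :=
        fun j => sum_quad' _ _ _ _ _ (fun k => by ring)
      rw [Finset.sum_congr rfl fun j _ => hin j, hS1]
      rw [sum_quad' (fun j => ‖Y j‖ ^ 2) _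
        (-(n : ℝ) * (d : ℝ) ^ 2 + (n : ℝ) * (d : ℝ) * ((d : ℝ) / 2 - (d : ℝ) ^ 2 / 4)
          + (d : ℝ) / 4 * (∑ k, (‖Y k‖ ^ 2) ^ 2))
        ((n : ℝ) * ((d : ℝ) / 2 - (d : ℝ) ^ 2 / 4) + (n : ℝ) * (d : ℝ) * ((d : ℝ) / 2)
          - (1 / 4) * (∑ k, (‖Y k‖ ^ 2) ^ 2))
        0 (fun j => by ring), hS1]
      ring
    have hq0 : ∑ j, ∑ k, ((d : ℝ) ^ 2 / 2 - (d : ℝ) * ‖Y j‖ ^ 2 / 2)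
        * (inner ℝ (Y j) (Y k) : ℝ) = 0 := by
      refine Finset.sum_eq_zero fun j _ => ?_
      rw [← Finset.mul_sum, hipr j, mul_zero]
    have hr0 : ∑ j, ∑ k, (-(d : ℝ) / 2) * (‖Y k‖ ^ 2 * (inner ℝ (Y j) (Y k) : ℝ)) = 0 := by
      rw [Finset.sum_comm]
      refine Finset.sum_eq_zero fun k _ => ?_
      rw [← Finset.mul_sum, ← Finset.mul_sum, hipl k, mul_zero, mul_zero]
    have ht : ∑ j, ∑ k, (1 / 2 : ℝ) * (‖Y j‖ ^ 2 * ‖Y k‖ ^ 2 * (inner ℝ (Y j) (Y k) : ℝ))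
        = (1 / 2) * ∑ j, ∑ k, (‖Y j‖ ^ 2 * ‖Y k‖ ^ 2 * (inner ℝ (Y j) (Y k) : ℝ)) := by
      simp [Finset.mul_sum]
    rw [hP0, hq0, hr0, ht]
    ring
  -- eventual equality of the two functions
  have heq : ∀ᶠ a : ℝ in atTop,
      2 / (n * π ^ ((d : ℝ) / 2)) * a ^ ((d : ℝ) / 2 + 1) * U a
        = 2 / (n : ℝ) ^ 2 * ∑ j, ∑ k,
      (Real.exp (-‖Y j - Y k‖ ^ 2 / (4 * a)) *
        ((‖Y j‖ ^ 2 + ‖Y k‖ ^ 2) * (d : ℝ) / 2 - (d : ℝ) ^ 2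
          + (-((‖Y j‖ ^ 2 + ‖Y k‖ ^ 2) * ‖Y j - Y k‖ ^ 2) / 4 + (d : ℝ) * ((d : ℝ) + 2) / 4
              + (d : ℝ) * ‖Y j - Y k‖ ^ 2 / 2) * a⁻¹
          + (-((d : ℝ) + 2) * ‖Y j - Y k‖ ^ 2 / 4) * a⁻¹ ^ 2
          + (‖Y j - Y k‖ ^ 2) ^ 2 / 16 * a⁻¹ ^ 3)
       + (‖Y j‖ ^ 2 * ‖Y k‖ ^ 2 - (‖Y j‖ ^ 2 + ‖Y k‖ ^ 2) * (d : ℝ) + (d : ℝ) ^ 2) *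
           (a * (Real.exp (-‖Y j - Y k‖ ^ 2 / (4 * a)) - 1))) := by
    filter_upwards [eventually_gt_atTop (0 : ℝ)] with a ha
    rw [hU a ha]
    have ha' : a ≠ 0 := ne_of_gt ha
    have hterm : ∀ j k : Fin n,
        a * (‖Y j‖ ^ 2 * ‖Y k‖ ^ 2 * Real.exp (-‖Y j - Y k‖ ^ 2 / (4 * a))
         - (‖Y j‖ ^ 2 + ‖Y k‖ ^ 2) * (1 / (4 * a ^ 2)) *
             (‖Y j - Y k‖ ^ 2 + 2 * a * d * (2 * a - 1)) *
             Real.exp (-‖Y j - Y k‖ ^ 2 / (4 * a))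
         + (1 / (16 * a ^ 4)) * Real.exp (-‖Y j - Y k‖ ^ 2 / (4 * a)) *
             (16 * d ^ 2 * a ^ 3 * (a - 1) + 4 * d * (d + 2) * a ^ 2
              + ‖Y j - Y k‖ ^ 4 + (8 * d * a ^ 2 - 4 * (d + 2) * a) * ‖Y j - Y k‖ ^ 2))
        = (Real.exp (-‖Y j - Y k‖ ^ 2 / (4 * a)) *
        ((‖Y j‖ ^ 2 + ‖Y k‖ ^ 2) * (d : ℝ) / 2 - (d : ℝ) ^ 2
          + (-((‖Y j‖ ^ 2 + ‖Y k‖ ^ 2) * ‖Y j - Y k‖ ^ 2) / 4 + (d : ℝ) * ((d : ℝ) + 2) / 4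
              + (d : ℝ) * ‖Y j - Y k‖ ^ 2 / 2) * a⁻¹
          + (-((d : ℝ) + 2) * ‖Y j - Y k‖ ^ 2 / 4) * a⁻¹ ^ 2
          + (‖Y j - Y k‖ ^ 2) ^ 2 / 16 * a⁻¹ ^ 3)
       + (‖Y j‖ ^ 2 * ‖Y k‖ ^ 2 - (‖Y j‖ ^ 2 + ‖Y k‖ ^ 2) * (d : ℝ) + (d : ℝ) ^ 2) *
           (a * (Real.exp (-‖Y j - Y k‖ ^ 2 / (4 * a)) - 1)))
          + (‖Y j‖ ^ 2 * ‖Y k‖ ^ 2 - (‖Y j‖ ^ 2 + ‖Y k‖ ^ 2) * (d : ℝ) + (d : ℝ) ^ 2) * a := by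
      intro j k
      exact pair' a (Real.exp (-‖Y j - Y k‖ ^ 2 / (4 * a))) (‖Y j - Y k‖) (‖Y j‖ ^ 2)
        (‖Y k‖ ^ 2) (d : ℝ) ha'
    have hG : a * ∑ j, ∑ k,
        (‖Y j‖ ^ 2 * ‖Y k‖ ^ 2 * Real.exp (-‖Y j - Y k‖ ^ 2 / (4 * a))
         - (‖Y j‖ ^ 2 + ‖Y k‖ ^ 2) * (1 / (4 * a ^ 2)) *
             (‖Y j - Y k‖ ^ 2 + 2 * a * d * (2 * a - 1)) *
             Real.exp (-‖Y j - Y k‖ ^ 2 / (4 * a))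
         + (1 / (16 * a ^ 4)) * Real.exp (-‖Y j - Y k‖ ^ 2 / (4 * a)) *
             (16 * d ^ 2 * a ^ 3 * (a - 1) + 4 * d * (d + 2) * a ^ 2
              + ‖Y j - Y k‖ ^ 4 + (8 * d * a ^ 2 - 4 * (d + 2) * a) * ‖Y j - Y k‖ ^ 2))
        = ∑ j, ∑ k,
      (Real.exp (-‖Y j - Y k‖ ^ 2 / (4 * a)) *
        ((‖Y j‖ ^ 2 + ‖Y k‖ ^ 2) * (d : ℝ) / 2 - (d : ℝ) ^ 2
          + (-((‖Y j‖ ^ 2 + ‖Y k‖ ^ 2) * ‖Y j - Y k‖ ^ 2) / 4 + (d : ℝ) * ((d : ℝ) + 2) / 4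
              + (d : ℝ) * ‖Y j - Y k‖ ^ 2 / 2) * a⁻¹
          + (-((d : ℝ) + 2) * ‖Y j - Y k‖ ^ 2 / 4) * a⁻¹ ^ 2
          + (‖Y j - Y k‖ ^ 2) ^ 2 / 16 * a⁻¹ ^ 3)
       + (‖Y j‖ ^ 2 * ‖Y k‖ ^ 2 - (‖Y j‖ ^ 2 + ‖Y k‖ ^ 2) * (d : ℝ) + (d : ℝ) ^ 2) *
           (a * (Real.exp (-‖Y j - Y k‖ ^ 2 / (4 * a)) - 1))) := by
      rw [Finset.mul_sum]
      rw [Finset.sum_congr rfl fun j _ => Finset.mul_sum _ _ _]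
      rw [Finset.sum_congr rfl fun j _ => Finset.sum_congr rfl fun k _ => hterm j k]
      have := hCm1
      rw [Finset.sum_congr rfl fun j (_: j ∈ Finset.univ) => Finset.sum_add_distrib,
        Finset.sum_add_distrib]
      rw [Finset.sum_congr rfl fun j (_: j ∈ Finset.univ) => (Finset.sum_mul _ _ _).symm,
        (Finset.sum_mul _ _ _).symm, hCm1, zero_mul, add_zero]
    rw [Real.div_rpow pi_pos.le ha.le ((d : ℝ) / 2), Real.rpow_add ha, Real.rpow_one, ← hG]
    have hπp : (0 : ℝ) < π ^ ((d : ℝ) / 2) := Real.rpow_pos_of_pos pi_pos _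
    have hap : (0 : ℝ) < a ^ ((d : ℝ) / 2) := Real.rpow_pos_of_pos ha _
    exact scalar' _ _ _ _ _ hn0 hπp.ne' hap.ne'
  -- assemble
  have hfin := hlim.const_mul (2 / (n : ℝ) ^ 2)
  have hval : 2 / (n : ℝ) ^ 2 * (∑ j, ∑ k,
        ((‖Y j‖ ^ 2 + ‖Y k‖ ^ 2) * (d : ℝ) / 2 - (d : ℝ) ^ 2
          - (‖Y j‖ ^ 2 * ‖Y k‖ ^ 2 - (‖Y j‖ ^ 2 + ‖Y k‖ ^ 2) * (d : ℝ) + (d : ℝ) ^ 2)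
            * ‖Y j - Y k‖ ^ 2 / 4))
      = (1 / (n : ℝ) ^ 2) * ∑ j, ∑ k,
        ‖Y j‖ ^ 2 * ‖Y k‖ ^ 2 * (inner ℝ (Y j) (Y k) : ℝ) := by
    rw [hL]; ring
  rw [← hval]
  exact Tendsto.congr' (EventuallyEq.symm heq) hfin
end
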